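/- arXiv:1909.00843 — 3 statements merged into one kernel-verified Lean document; each statement's English description precedes it below -/
import Mathlib

section
/- Let (x_t) be iterates of projected SGD on a μ-strongly convex function f with step sizes η_t = 2/(μ(t+1)), stochastic gradients ĝ_t with ‖ĝ_t‖ ≤ L+1, and noise ẑ_t = g_t − ĝ_t where g_t ∈ ∂f(x_t). Then for each t ≥ 1: t·(f(x_t) − f(x*) − ⟨ẑ_t, x_t − x*⟩) ≤ (L+1)²/μ + (μ/4)(t(t−1)‖x_t − x*‖² − t(t+1)‖x_{t+1} − x*‖²). -/
open scoped RealInnerProductSpace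

/-- One step of projected SGD on a `μ`-strongly convex function with step
size `η_t = 2/(μ(t+1))`, stochastic gradient `ĝ_t` with `‖ĝ_t‖ ≤ L+1`, noise
`ẑ_t = g_t − ĝ_t`, `g_t ∈ ∂f(x_t)`. Then
`t·(f(x_t) − f(x*) − ⟨ẑ_t, x_t − x*⟩) ≤ (L+1)²/μ + (μ/4)(t(t−1)‖x_t − x*‖² − t(t+1)‖x_{t+1} − x*‖²)`. -/
theorem stmt4 {n : ℕ} (X : Set (EuclideanSpace ℝ (Fin n)))
    (hXclosed : IsClosed X) (hXconvex : Convex ℝ X)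
    (f : EuclideanSpace ℝ (Fin n) → ℝ) (μ L : ℝ) (hμ : 0 < μ)
    (t : ℕ) (ht : 1 ≤ t)
    (xt xt' xstar g ghat zhat : EuclideanSpace ℝ (Fin n))
    (hxt : xt ∈ X) (hxstar : xstar ∈ X)
    -- x* minimizes f over X:
    (hmin : ∀ y ∈ X, f xstar ≤ f y)
    -- strong convexity inequality for the subgradient g of f at x_t:
    (hsc : ∀ y ∈ X, f y ≥ f xt + ⟪g, y - xt⟫ + μ / 2 * ‖y - xt‖ ^ 2)
    -- noise decomposition ẑ_t = g_t − ĝ_t: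
    (hz : zhat = g - ghat)
    -- bounded stochastic gradient:
    (hg : ‖ghat‖ ≤ L + 1)
    -- projection step  x_{t+1} = Π_X(x_t − η_t ĝ_t), which is a contraction toward x* ∈ X:
    (hproj : ‖xt' - xstar‖ ≤ ‖(xt - (2 / (μ * ((t : ℝ) + 1))) • ghat) - xstar‖) :
    (t : ℝ) * (f xt - f xstar - ⟪zhat, xt - xstar⟫) ≤
      (L + 1) ^ 2 / μ +
        μ / 4 * ((t : ℝ) * ((t : ℝ) - 1) * ‖xt - xstar‖ ^ 2 -
          (t : ℝ) * ((t : ℝ) + 1) * ‖xt' - xstar‖ ^ 2) := by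
  have htR : (1 : ℝ) ≤ (t : ℝ) := by exact_mod_cast ht
  set η : ℝ := 2 / (μ * ((t : ℝ) + 1)) with hη
  have hden : 0 < μ * ((t : ℝ) + 1) := by positivity
  have hηpos : 0 < η := by positivity
  have hηeq : η * (μ * ((t : ℝ) + 1)) = 2 := div_mul_cancel₀ 2 (ne_of_gt hden)
  -- norm expansion
  have hexp : ‖(xt - η • ghat) - xstar‖ ^ 2
      = ‖xt - xstar‖ ^ 2 - 2 * η * ⟪ghat, xt - xstar⟫ + η ^ 2 * ‖ghat‖ ^ 2 := by
    have : (xt - η • ghat) - xstar = (xt - xstar) - η • ghat := by abel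
    rw [this, norm_sub_sq_real, real_inner_smul_right, norm_smul, real_inner_comm]
    simp [abs_of_pos hηpos, mul_pow]
    ring
  have h1 : ‖xt' - xstar‖ ^ 2
      ≤ ‖xt - xstar‖ ^ 2 - 2 * η * ⟪ghat, xt - xstar⟫ + η ^ 2 * ‖ghat‖ ^ 2 := by
    rw [← hexp]
    exact pow_le_pow_left₀ (norm_nonneg _) hproj 2
  have h2 : f xt - f xstar ≤ ⟪g, xt - xstar⟫ - μ / 2 * ‖xt - xstar‖ ^ 2 := by
    have := hsc xstar hxstar
    have hinner : ⟪g, xstar - xt⟫ = - ⟪g, xt - xstar⟫ := by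
      rw [← inner_neg_right, neg_sub]
    have hnorm : ‖xstar - xt‖ = ‖xt - xstar‖ := norm_sub_rev _ _
    rw [hinner, hnorm] at this
    linarith
  have h3 : ⟪g, xt - xstar⟫ = ⟪zhat, xt - xstar⟫ + ⟪ghat, xt - xstar⟫ := by
    subst hz; rw [inner_sub_left]; ring
  have hg2 : ‖ghat‖ ^ 2 ≤ (L + 1) ^ 2 :=
    pow_le_pow_left₀ (norm_nonneg _) hg 2
  -- core inequality, multiplied by t
  have key : (t : ℝ) * (f xt - f xstar - ⟪zhat, xt - xstar⟫)
      ≤ (t : ℝ) * ((‖xt - xstar‖ ^ 2 - ‖xt' - xstar‖ ^ 2) / (2 * η)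
          + η / 2 * (L + 1) ^ 2 - μ / 2 * ‖xt - xstar‖ ^ 2) := by
    apply mul_le_mul_of_nonneg_left _ (by linarith)
    have hinnerle : ⟪ghat, xt - xstar⟫
        ≤ (‖xt - xstar‖ ^ 2 - ‖xt' - xstar‖ ^ 2) / (2 * η) + η / 2 * (L + 1) ^ 2 := by
      rw [div_add' _ _ _ (by positivity), le_div_iff₀ (by positivity)]
      nlinarith [sq_nonneg η]
    linarith [h2, h3.le]
  refine key.trans ?_
  have e1 : (t : ℝ) * ((‖xt - xstar‖ ^ 2 - ‖xt' - xstar‖ ^ 2) / (2 * η))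
      = μ * ((t : ℝ) + 1) / 4 * (t : ℝ) * (‖xt - xstar‖ ^ 2 - ‖xt' - xstar‖ ^ 2) := by
    rw [hη]
    field_simp
    ring
  have e2 : (t : ℝ) * (η / 2 * (L + 1) ^ 2) ≤ (L + 1) ^ 2 / μ := by
    have : (t : ℝ) * (η / 2) ≤ 1 / μ := by
      have h4 : (t : ℝ) * (η / 2) = (t : ℝ) / (μ * ((t:ℝ)+1)) := by rw [hη]; ring
      rw [h4, div_le_div_iff₀ hden hμ]
      nlinarith
    calc (t : ℝ) * (η / 2 * (L + 1) ^ 2) = ((t : ℝ) * (η / 2)) * (L + 1) ^ 2 := by ring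
      _ ≤ (1 / μ) * (L + 1) ^ 2 := mul_le_mul_of_nonneg_right this (sq_nonneg _)
      _ = (L + 1) ^ 2 / μ := by ring
  have e0 : (t : ℝ) * ((‖xt - xstar‖ ^ 2 - ‖xt' - xstar‖ ^ 2) / (2 * η)
        + η / 2 * (L + 1) ^ 2 - μ / 2 * ‖xt - xstar‖ ^ 2)
      = (t : ℝ) * ((‖xt - xstar‖ ^ 2 - ‖xt' - xstar‖ ^ 2) / (2 * η))
        + (t : ℝ) * (η / 2 * (L + 1) ^ 2) - (t : ℝ) * (μ / 2 * ‖xt - xstar‖ ^ 2) := by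
    ring
  have e3 : μ * ((t : ℝ) + 1) / 4 * (t : ℝ) * (‖xt - xstar‖ ^ 2 - ‖xt' - xstar‖ ^ 2)
        - (t : ℝ) * (μ / 2 * ‖xt - xstar‖ ^ 2)
      = μ / 4 * ((t : ℝ) * ((t : ℝ) - 1) * ‖xt - xstar‖ ^ 2 -
          (t : ℝ) * ((t : ℝ) + 1) * ‖xt' - xstar‖ ^ 2) := by
    ring
  linarith [key, e0, e1, e2, e3]
end

section
/- Under the same SGD setup, summing over t and applying Jensen's inequality yields: f(∑_{t=1}^T γ_t x_t) − f(x*) ≤ (2/(T(T+1))) ∑_{t=1}^T t·⟨ẑ_t, x_t − x*⟩ + 2(L+1)²/(μ(T+1)), where γ_t = 2t/(T(T+1)). -/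
open scoped RealInnerProductSpace

lemma gauss_real (T : ℕ) : ∑ t ∈ Finset.Icc 1 T, (t : ℝ) = (T : ℝ) * ((T : ℝ) + 1) / 2 := by
  induction T with
  | zero => simp
  | succ T ih =>
    rw [Finset.sum_Icc_succ_top (by omega)]
    push_cast
    rw [ih]; ring

lemma tele_real (A : ℕ → ℝ) (T : ℕ) :
    ∑ t ∈ Finset.Icc 1 T, (A t - A (t + 1)) = A 1 - A (T + 1) := by
  induction T with
  | zero => simp
  | succ T ih =>
    rw [Finset.sum_Icc_succ_top (by omega), ih]; ring

/-- Summing the per-step SGD bound over `t = 1, …, T` and applying Jensen's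
inequality yields
`f(∑ γ_t x_t) − f(x*) ≤ (2/(T(T+1))) ∑ t·⟨ẑ_t, x_t − x*⟩ + 2(L+1)²/(μ(T+1))`,
where `γ_t = 2t/(T(T+1))`. -/
theorem stmt5 {n : ℕ} (X : Set (EuclideanSpace ℝ (Fin n)))
    (hXclosed : IsClosed X) (hXconvex : Convex ℝ X)
    (f : EuclideanSpace ℝ (Fin n) → ℝ) (hconv : ConvexOn ℝ X f)
    (μ L : ℝ) (hμ : 0 < μ) (T : ℕ) (hT : 1 ≤ T)
    (x zhat : ℕ → EuclideanSpace ℝ (Fin n)) (xstar : EuclideanSpace ℝ (Fin n))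
    (hxX : ∀ t ∈ Finset.Icc 1 T, x t ∈ X) (hxstar : xstar ∈ X)
    -- x* minimizes f over X:
    (hmin : ∀ y ∈ X, f xstar ≤ f y)
    -- the per-step bound (STATEMENT 4) for each t = 1, …, T:
    (hstep : ∀ t ∈ Finset.Icc 1 T,
      (t : ℝ) * (f (x t) - f xstar - ⟪zhat t, x t - xstar⟫) ≤
        (L + 1) ^ 2 / μ +
          μ / 4 * ((t : ℝ) * ((t : ℝ) - 1) * ‖x t - xstar‖ ^ 2 -
            (t : ℝ) * ((t : ℝ) + 1) * ‖x (t + 1) - xstar‖ ^ 2)) :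
    f (∑ t ∈ Finset.Icc 1 T, ((2 * (t : ℝ)) / ((T : ℝ) * ((T : ℝ) + 1))) • x t) - f xstar ≤
      (2 / ((T : ℝ) * ((T : ℝ) + 1))) *
          (∑ t ∈ Finset.Icc 1 T, (t : ℝ) * ⟪zhat t, x t - xstar⟫) +
        2 * (L + 1) ^ 2 / (μ * ((T : ℝ) + 1)) := by
  have hT1 : (1 : ℝ) ≤ (T : ℝ) := by exact_mod_cast hT
  have hc : (0 : ℝ) < (T : ℝ) * ((T : ℝ) + 1) := by nlinarith
  set c : ℝ := (T : ℝ) * ((T : ℝ) + 1) with hcdef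
  -- weights sum to 1
  have hw1 : ∑ t ∈ Finset.Icc 1 T, (2 * (t : ℝ)) / c = 1 := by
    rw [← Finset.sum_div, ← Finset.mul_sum, gauss_real]
    field_simp
    exact hcdef.symm
  have hw0 : ∀ t ∈ Finset.Icc 1 T, (0 : ℝ) ≤ (2 * (t : ℝ)) / c := by
    intro t _
    positivity
  -- Jensen
  have hjensen := hconv.map_sum_le hw0 hw1 hxX
  -- sum the per-step bound
  have hsum := Finset.sum_le_sum hstep
  have htele : ∑ t ∈ Finset.Icc 1 T,
      ((t : ℝ) * ((t : ℝ) - 1) * ‖x t - xstar‖ ^ 2 -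
        (t : ℝ) * ((t : ℝ) + 1) * ‖x (t + 1) - xstar‖ ^ 2) =
      - ((T : ℝ) * ((T : ℝ) + 1) * ‖x (T + 1) - xstar‖ ^ 2) := by
    have h := tele_real (fun t => (t : ℝ) * ((t : ℝ) - 1) * ‖x t - xstar‖ ^ 2) T
    have heq : ∑ t ∈ Finset.Icc 1 T,
        ((t : ℝ) * ((t : ℝ) - 1) * ‖x t - xstar‖ ^ 2 -
          (t : ℝ) * ((t : ℝ) + 1) * ‖x (t + 1) - xstar‖ ^ 2) =
        ∑ t ∈ Finset.Icc 1 T,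
        ((t : ℝ) * ((t : ℝ) - 1) * ‖x t - xstar‖ ^ 2 -
          ((t : ℕ) + 1 : ℕ) * (((t : ℕ) + 1 : ℕ) - 1 : ℝ) * ‖x (t + 1) - xstar‖ ^ 2) := by
      refine Finset.sum_congr rfl fun t _ => ?_
      push_cast; ring
    rw [heq, h]
    push_cast
    ring
  have hRHS : ∑ t ∈ Finset.Icc 1 T,
      ((L + 1) ^ 2 / μ +
        μ / 4 * ((t : ℝ) * ((t : ℝ) - 1) * ‖x t - xstar‖ ^ 2 -
          (t : ℝ) * ((t : ℝ) + 1) * ‖x (t + 1) - xstar‖ ^ 2)) ≤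
      (T : ℝ) * ((L + 1) ^ 2 / μ) := by
    rw [Finset.sum_add_distrib, Finset.sum_const, ← Finset.mul_sum, htele]
    have : Finset.card (Finset.Icc 1 T) = T := by simp
    rw [this]
    have h1 : μ / 4 * -((T : ℝ) * ((T : ℝ) + 1) * ‖x (T + 1) - xstar‖ ^ 2) ≤ 0 := by
      have : (0:ℝ) ≤ (T : ℝ) * ((T : ℝ) + 1) * ‖x (T + 1) - xstar‖ ^ 2 := by positivity
      nlinarith
    simp only [nsmul_eq_mul]
    linarith
  have hS : ∑ t ∈ Finset.Icc 1 T, (t : ℝ) * (f (x t) - f xstar) ≤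
      (∑ t ∈ Finset.Icc 1 T, (t : ℝ) * ⟪zhat t, x t - xstar⟫) + (T : ℝ) * ((L + 1) ^ 2 / μ) := by
    have h := le_trans hsum hRHS
    have hrw : ∑ t ∈ Finset.Icc 1 T, (t : ℝ) * (f (x t) - f xstar - ⟪zhat t, x t - xstar⟫) =
        ∑ t ∈ Finset.Icc 1 T, (t : ℝ) * (f (x t) - f xstar) -
          ∑ t ∈ Finset.Icc 1 T, (t : ℝ) * ⟪zhat t, x t - xstar⟫ := by
      rw [← Finset.sum_sub_distrib]
      exact Finset.sum_congr rfl fun t _ => by ring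
    linarith [hrw ▸ h]
  -- combine
  have hfsum : ∑ t ∈ Finset.Icc 1 T, (2 * (t : ℝ)) / c * f (x t) - f xstar =
      (2 / c) * ∑ t ∈ Finset.Icc 1 T, (t : ℝ) * (f (x t) - f xstar) := by
    rw [Finset.mul_sum]
    have : ∑ t ∈ Finset.Icc 1 T, 2 / c * ((t : ℝ) * (f (x t) - f xstar)) =
        ∑ t ∈ Finset.Icc 1 T, ((2 * (t : ℝ)) / c * f (x t) - (2 * (t : ℝ)) / c * f xstar) := by
      exact Finset.sum_congr rfl fun t _ => by field_simp
    rw [this, Finset.sum_sub_distrib, ← Finset.sum_mul, hw1]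
    ring
  have hkey : f (∑ t ∈ Finset.Icc 1 T, ((2 * (t : ℝ)) / c) • x t) - f xstar ≤
      (2 / c) * ∑ t ∈ Finset.Icc 1 T, (t : ℝ) * (f (x t) - f xstar) := by
    rw [← hfsum]
    simp only [smul_eq_mul] at hjensen
    linarith [hjensen]
  have hpos : (0:ℝ) < 2 / c := by positivity
  have hlast : (2 / c) * ((∑ t ∈ Finset.Icc 1 T, (t : ℝ) * ⟪zhat t, x t - xstar⟫) +
      (T : ℝ) * ((L + 1) ^ 2 / μ)) =
      (2 / c) * (∑ t ∈ Finset.Icc 1 T, (t : ℝ) * ⟪zhat t, x t - xstar⟫) +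
        2 * (L + 1) ^ 2 / (μ * ((T : ℝ) + 1)) := by
    rw [hcdef]
    field_simp
  calc f (∑ t ∈ Finset.Icc 1 T, ((2 * (t : ℝ)) / c) • x t) - f xstar
      ≤ (2 / c) * ∑ t ∈ Finset.Icc 1 T, (t : ℝ) * (f (x t) - f xstar) := hkey
    _ ≤ (2 / c) * ((∑ t ∈ Finset.Icc 1 T, (t : ℝ) * ⟪zhat t, x t - xstar⟫) +
        (T : ℝ) * ((L + 1) ^ 2 / μ)) := by
        apply mul_le_mul_of_nonneg_left hS (le_of_lt hpos)
    _ = _ := hlast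
end

section
/- Let X₁,…,Xₙ be independent uniform ±1 random variables and X = (1/n)∑Xᵢ. If √6 ≤ c ≤ √n/2, then P(X ≥ c/√n) ≥ exp(−9c²/2). -/
open MeasureTheory ProbabilityTheory
open scoped ENNReal

section Helpers

lemma cb_sq : ∀ t : ℕ, 1 ≤ t → 16 ^ t ≤ 4 * t * (Nat.centralBinom t) ^ 2 := by
  intro t
  induction t with
  | zero => omega
  | succ t ih =>
    intro _
    rcases Nat.eq_zero_or_pos t with h0 | h1
    · subst h0; simp [Nat.centralBinom]
    · have key := Nat.succ_mul_centralBinom_succ t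
      have ih' := ih h1
      have hsq : ((t+1) * Nat.centralBinom (t+1))^2 = (2*(2*t+1))^2 * (Nat.centralBinom t)^2 := by
        rw [key]; ring
      have h2 : 16 ^ (t+1) * (t+1)^2 ≤ 4*(t+1) * (Nat.centralBinom (t+1))^2 * (t+1)^2 := by
        have : 4*(t+1) * (Nat.centralBinom (t+1))^2 * (t+1)^2
            = 4*(t+1) * ((2*(2*t+1))^2 * (Nat.centralBinom t)^2) := by
          rw [← hsq]; ring
        rw [this]
        have hstep : 16 * (t+1)^2 * (4 * t) ≤ 4*(t+1) * (2*(2*t+1))^2 := by nlinarith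
        calc 16 ^ (t+1) * (t+1)^2 = 16 * (t+1)^2 * 16 ^ t := by ring
          _ ≤ 16 * (t+1)^2 * (4 * t * (Nat.centralBinom t)^2) :=
              Nat.mul_le_mul_left _ ih'
          _ = 16 * (t+1)^2 * (4*t) * (Nat.centralBinom t)^2 := by ring
          _ ≤ 4*(t+1) * (2*(2*t+1))^2 * (Nat.centralBinom t)^2 :=
              Nat.mul_le_mul_right _ hstep
          _ = 4*(t+1) * ((2*(2*t+1))^2 * (Nat.centralBinom t)^2) := by ring
      exact Nat.le_of_mul_le_mul_right h2 (by positivity)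

lemma choose_half_sq (n : ℕ) (hn : 1 ≤ n) : 4 ^ n ≤ 4 * n * (n.choose (n/2)) ^ 2 := by
  rcases Nat.even_or_odd n with ⟨t, ht⟩ | ⟨t, ht⟩
  · subst ht
    have ht1 : 1 ≤ t := by omega
    have h := cb_sq t ht1
    have hd : (t + t) / 2 = t := by omega
    rw [hd]
    have hcb : Nat.centralBinom t = (t+t).choose t := by
      rw [Nat.centralBinom]; congr 1; omega
    rw [hcb] at h
    calc 4 ^ (t+t) = 16 ^ t := by
          rw [show (16:ℕ) = 4^2 by norm_num, ← Nat.pow_mul]; congr 1; omega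
      _ ≤ 4 * t * ((t+t).choose t)^2 := h
      _ ≤ 4 * (t+t) * ((t+t).choose t)^2 := by
          apply Nat.mul_le_mul_right; omega
  · subst ht
    have hd : (2*t+1)/2 = t := by omega
    rw [hd]
    rcases Nat.eq_zero_or_pos t with h0 | h1
    · subst h0; simp
    · have h := cb_sq t h1
      have hB : Nat.centralBinom t = (2*t).choose t := rfl
      rw [hB] at h
      have hrel : (2*t+1) * (2*t).choose t = (2*t+1).choose t * (t+1) := by
        have h1' := Nat.add_one_mul_choose_eq (2*t) t
        have h2' : (2*t+1).choose (t+1) = (2*t+1).choose t := by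
          have : (2*t+1) - t = t + 1 := by omega
          rw [← this, Nat.choose_symm (by omega)]
        simpa [Nat.succ_eq_add_one, h2'] using h1'
      have key : 4 ^ (2*t+1) * (t+1)^2 ≤ 4 * (2*t+1) * ((2*t+1).choose t)^2 * (t+1)^2 := by
        have e1 : 4 * (2*t+1) * ((2*t+1).choose t)^2 * (t+1)^2
            = 4 * (2*t+1) * ((2*t+1).choose t * (t+1))^2 := by ring
        rw [e1, ← hrel]
        have e2 : 4 * (2*t+1) * ((2*t+1) * (2*t).choose t)^2
            = 4 * (2*t+1)^3 * ((2*t).choose t)^2 := by ring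
        rw [e2]
        calc 4 ^ (2*t+1) * (t+1)^2 = 4 * (t+1)^2 * 16 ^ t := by
              rw [show (16:ℕ) ^ t = 4 ^ (2*t) by
                rw [show (16:ℕ) = 4^2 by norm_num, ← Nat.pow_mul]]; ring
          _ ≤ 4 * (t+1)^2 * (4 * t * ((2*t).choose t)^2) := Nat.mul_le_mul_left _ h
          _ = (4 * (t+1)^2 * (4*t)) * ((2*t).choose t)^2 := by ring
          _ ≤ (4 * (2*t+1)^3) * ((2*t).choose t)^2 := by
              apply Nat.mul_le_mul_right; nlinarith
      exact Nat.le_of_mul_le_mul_right key (by positivity)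

lemma choose_half_real (n : ℕ) (hn : 1 ≤ n) :
    (2:ℝ) ^ n ≤ 2 * Real.sqrt n * (n.choose (n/2)) := by
  have h : ((4:ℝ)) ^ n ≤ 4 * n * (n.choose (n/2))^2 := by exact_mod_cast choose_half_sq n hn
  have hsq : (Real.sqrt n)^2 = n := Real.sq_sqrt (by positivity)
  have hC : (0:ℝ) ≤ (n.choose (n/2) : ℝ) := by positivity
  have hb : (0:ℝ) ≤ 2 * Real.sqrt n * (n.choose (n/2)) := by positivity
  have h2 : ((2:ℝ)^n)^2 ≤ (2 * Real.sqrt n * (n.choose (n/2)))^2 := by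
    calc ((2:ℝ)^n)^2 = 4^n := by rw [← pow_mul, mul_comm n 2, pow_mul]; norm_num
      _ ≤ 4 * n * (n.choose (n/2))^2 := h
      _ = (2 * Real.sqrt n * (n.choose (n/2)))^2 := by rw [mul_pow, mul_pow, hsq]; ring
  calc (2:ℝ)^n = Real.sqrt (((2:ℝ)^n)^2) := (Real.sqrt_sq (by positivity)).symm
    _ ≤ Real.sqrt ((2 * Real.sqrt n * (n.choose (n/2)))^2) := Real.sqrt_le_sqrt h2
    _ = 2 * Real.sqrt n * (n.choose (n/2)) := Real.sqrt_sq hb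

lemma step_ineq (u : ℝ) (h0 : 0 ≤ u) (h8 : u ≤ 4/5) :
    (1 + u) ≤ (1 + 3*u + (3*u)^2/2 + (3*u)^3/6 + (3*u)^4/24) * (1 - u) := by
  nlinarith [sq_nonneg u, mul_nonneg h0 h0, mul_nonneg (mul_nonneg h0 h0) h0,
    mul_nonneg (mul_nonneg (mul_nonneg h0 h0) h0) h0, sq_nonneg (1-u),
    mul_nonneg (mul_nonneg h0 h0) (sub_nonneg.2 h8)]

lemma exp_ge_T4 (x : ℝ) (hx : 0 ≤ x) :
    1 + x + x^2/2 + x^3/6 + x^4/24 ≤ Real.exp x := by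
  have h := Real.sum_le_exp_of_nonneg hx 5
  simp [Finset.sum_range_succ, Nat.factorial] at h
  linarith

lemma step (n j : ℝ) (hn : 1 ≤ n) (hj0 : 0 ≤ j) (hj5 : 5*(2*j+1) ≤ 4*n) :
    n/2 + j + 1 ≤ Real.exp (3*(2*j+1)/n) * (n/2 - j) := by
  have hnpos : (0:ℝ) < n := by linarith
  set u : ℝ := (2*j+1)/n with hu
  have hu0 : 0 ≤ u := by positivity
  have hu8 : u ≤ 4/5 := by rw [hu, div_le_iff₀ hnpos]; linarith
  have hun : u * n = 2*j+1 := by rw [hu]; field_simp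
  have hT : 1 + 3*u + (3*u)^2/2 + (3*u)^3/6 + (3*u)^4/24 ≤ Real.exp (3*u) :=
    exp_ge_T4 _ (by positivity)
  have hkey := step_ineq u hu0 hu8
  have hx : 3*(2*j+1)/n = 3*u := by rw [hu]; ring
  rw [hx]
  set T : ℝ := 1 + 3*u + (3*u)^2/2 + (3*u)^3/6 + (3*u)^4/24 with hTdef
  have hT1 : 1 ≤ T := by rw [hTdef]; nlinarith [sq_nonneg u, pow_nonneg hu0 3, pow_nonneg hu0 4]
  clear_value T
  have hhalf : (0:ℝ) ≤ n/2 - j := by linarith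
  have h2 : n + (2*j+1) ≤ T * (n - (2*j+1)) := by
    have h := mul_le_mul_of_nonneg_left hkey (le_of_lt hnpos)
    calc n + (2*j+1) = n*(1+u) := by rw [← hun]; ring
      _ ≤ n*(T*(1-u)) := h
      _ = T*(n - u*n) := by ring
      _ = T*(n - (2*j+1)) := by rw [hun]
  have h3 : T*(n/2 - j) = (T*(n - (2*j+1)) + T)/2 := by ring
  have h4 : T*(n/2-j) ≤ Real.exp (3*u) * (n/2-j) := mul_le_mul_of_nonneg_right hT hhalf
  linarith

lemma choose_anti (n a : ℕ) (hna : n ≤ 2*a) : ∀ b : ℕ, a ≤ b → n.choose b ≤ n.choose a := by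
  intro b
  induction b with
  | zero => intro hab; have : a = 0 := by omega
            subst this; rfl
  | succ b ih =>
    intro hab
    rcases Nat.lt_or_ge a (b+1) with h | h
    · have hab' : a ≤ b := by omega
      have h1 := ih hab'
      have h2 : n.choose (b+1) ≤ n.choose b := by
        have e := Nat.choose_succ_right_eq n b
        have hnb : n - b ≤ b + 1 := by omega
        have : n.choose (b+1) * (b+1) ≤ n.choose b * (b+1) :=
          e ▸ Nat.mul_le_mul_left _ hnb
        exact Nat.le_of_mul_le_mul_right this (by omega)
      omega
    · have : a = b + 1 := by omega
      subst this; rfl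

lemma chain (n m : ℕ) (hm : m = n/2) (hn1 : 1 ≤ n) :
    ∀ I : ℕ, 5*(2*(I:ℝ) - 1) ≤ 4*n → m + I ≤ n →
      (n.choose m : ℝ) * Real.exp (-(3*I^2)/n) ≤ n.choose (m+I) := by
  intro I
  induction I with
  | zero => intro _ _; simp
  | succ I ih =>
    intro h5 hle
    have hnR : (1:ℝ) ≤ n := by exact_mod_cast hn1
    have hnpos : (0:ℝ) < n := by linarith
    have h5' : 5*(2*(I:ℝ) - 1) ≤ 4*n := by push_cast at h5 ⊢; linarith
    have hle' : m + I ≤ n := by omega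
    have hprev := ih h5' hle'
    have hjI : 5*(2*(I:ℝ)+1) ≤ 4*n := by push_cast at h5; linarith
    have hstep := step n I hnR (by positivity) hjI
    have hmR : (m:ℝ) ≤ (n:ℝ)/2 := by
      rw [hm]
      have : ((n/2 : ℕ) : ℝ) * 2 ≤ n := by exact_mod_cast Nat.div_mul_le_self n 2
      linarith
    have hrel : (n.choose (m+I+1) : ℝ) * ((m:ℝ)+I+1) = (n.choose (m+I) : ℝ) * ((n:ℝ) - ((m:ℝ)+I)) := by
      have e := Nat.choose_succ_right_eq n (m+I)
      have h := congrArg (fun k : ℕ => (k:ℝ)) e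
      push_cast [hle'] at h
      convert h using 2 <;> push_cast <;> ring
    have hsub : (n:ℝ)/2 - I ≤ (n:ℝ) - ((m:ℝ)+I) := by linarith
    have hexp_pos : (0:ℝ) < Real.exp (3*(2*(I:ℝ)+1)/n) := Real.exp_pos _
    have hstep2 : ((m:ℝ)+I+1) ≤ Real.exp (3*(2*(I:ℝ)+1)/n) * ((n:ℝ) - ((m:ℝ)+I)) := by
      have h1 : Real.exp (3*(2*(I:ℝ)+1)/n) * ((n:ℝ)/2 - I) ≤
          Real.exp (3*(2*(I:ℝ)+1)/n) * ((n:ℝ) - ((m:ℝ)+I)) :=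
        mul_le_mul_of_nonneg_left hsub (le_of_lt hexp_pos)
      linarith
    have hstep3 : Real.exp (-(3*(2*(I:ℝ)+1))/n) * ((m:ℝ)+I+1) ≤ (n:ℝ) - ((m:ℝ)+I) := by
      have h1 := mul_le_mul_of_nonneg_left hstep2 (le_of_lt (Real.exp_pos (-(3*(2*(I:ℝ)+1))/n)))
      have h2 : Real.exp (-(3*(2*(I:ℝ)+1))/n) * Real.exp (3*(2*(I:ℝ)+1)/n) = 1 := by
        rw [← Real.exp_add, show -(3*(2*(I:ℝ)+1))/n + 3*(2*(I:ℝ)+1)/n = 0 by ring, Real.exp_zero]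
      calc Real.exp (-(3*(2*(I:ℝ)+1))/n) * ((m:ℝ)+I+1) ≤
          Real.exp (-(3*(2*(I:ℝ)+1))/n) * (Real.exp (3*(2*(I:ℝ)+1)/n) * ((n:ℝ) - ((m:ℝ)+I))) := h1
        _ = (Real.exp (-(3*(2*(I:ℝ)+1))/n) * Real.exp (3*(2*(I:ℝ)+1)/n)) * ((n:ℝ) - ((m:ℝ)+I)) := by ring
        _ = (n:ℝ) - ((m:ℝ)+I) := by rw [h2]; ring
    have e1 : Real.exp (-(3*((I:ℝ)+1)^2)/n)
        = Real.exp (-(3*(I:ℝ)^2)/n) * Real.exp (-(3*(2*(I:ℝ)+1))/n) := by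
      rw [← Real.exp_add]; congr 1; field_simp; ring
    have hCm : (0:ℝ) ≤ (n.choose m : ℝ) := by positivity
    have hEI : (0:ℝ) ≤ (n.choose m : ℝ) * Real.exp (-(3*(I:ℝ)^2)/n) := by positivity
    have hnmI : (0:ℝ) ≤ (n:ℝ) - ((m:ℝ)+I) := by
      have : ((m+I : ℕ):ℝ) ≤ (n:ℝ) := by exact_mod_cast hle'
      push_cast at this; linarith
    have hgoal : (n.choose m : ℝ) * Real.exp (-(3*((I:ℝ)+1)^2)/n) * ((m:ℝ)+I+1) ≤
        (n.choose (m+I+1) : ℝ) * ((m:ℝ)+I+1) := by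
      rw [hrel, e1]
      calc (n.choose m : ℝ) * (Real.exp (-(3*(I:ℝ)^2)/n) * Real.exp (-(3*(2*(I:ℝ)+1))/n)) * ((m:ℝ)+I+1)
          = ((n.choose m : ℝ) * Real.exp (-(3*(I:ℝ)^2)/n)) * (Real.exp (-(3*(2*(I:ℝ)+1))/n) * ((m:ℝ)+I+1)) := by ring
        _ ≤ ((n.choose m : ℝ) * Real.exp (-(3*(I:ℝ)^2)/n)) * ((n:ℝ) - ((m:ℝ)+I)) :=
            mul_le_mul_of_nonneg_left hstep3 hEI
        _ ≤ (n.choose (m+I) : ℝ) * ((n:ℝ) - ((m:ℝ)+I)) :=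
            mul_le_mul_of_nonneg_right hprev hnmI
    have hpos1 : (0:ℝ) < (m:ℝ)+I+1 := by positivity
    have := le_of_mul_le_mul_right (by linarith [hgoal] :
      (n.choose m : ℝ) * Real.exp (-(3*((I:ℝ)+1)^2)/n) * ((m:ℝ)+I+1)
        ≤ (n.choose (m+I+1) : ℝ) * ((m:ℝ)+I+1)) hpos1
    have e2 : (-(3*(((I+1):ℕ):ℝ)^2)/(n:ℝ)) = (-(3*((I:ℝ)+1)^2)/(n:ℝ)) := by push_cast; ring
    rw [e2]
    exact this

lemma ofReal_half : ENNReal.ofReal ((1/2:ℝ)) = 1/2 := by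
  rw [one_div, ENNReal.ofReal_inv_of_pos (by norm_num), one_div]
  norm_num

lemma half_pow (n : ℕ) : ((1:ℝ≥0∞)/2)^n = ENNReal.ofReal ((1/2:ℝ)^n) := by
  rw [ENNReal.ofReal_pow (by norm_num : (0:ℝ) ≤ 1/2), ofReal_half]

lemma sum_signs (n : ℕ) (A : Finset (Fin n)) :
    ∑ i : Fin n, (if i ∈ A then (1:ℝ) else -1) = 2*A.card - n := by
  classical
  rw [← Finset.sum_filter_add_sum_filter_not Finset.univ (· ∈ A)]
  have e1 : Finset.univ.filter (· ∈ A) = A := by ext i; simp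
  have e2 : (Finset.univ.filter (· ∉ A)).card = n - A.card := by
    have : Finset.univ.filter (· ∉ A) = Aᶜ := by ext i; simp
    rw [this, Finset.card_compl, Fintype.card_fin]
  have h1 : ∑ i ∈ Finset.univ.filter (· ∈ A), (if i ∈ A then (1:ℝ) else -1)
      = A.card := by
    rw [e1, Finset.sum_congr rfl (fun i hi => if_pos hi), Finset.sum_const, nsmul_eq_mul, mul_one]
  have h2 : ∑ i ∈ Finset.univ.filter (· ∉ A), (if i ∈ A then (1:ℝ) else -1)
      = -((n:ℝ) - A.card) := by
    rw [Finset.sum_congr rfl (fun i hi => if_neg (Finset.mem_filter.mp hi).2),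
      Finset.sum_const, nsmul_eq_mul, e2]
    have hA : A.card ≤ n := by
      simpa using Finset.card_le_card (Finset.subset_univ A)
    push_cast [hA]
    ring
  rw [h1, h2]
  ring

lemma count_bound {Ω : Type*} [MeasurableSpace Ω] (μ : Measure Ω) [IsProbabilityMeasure μ]
    (n : ℕ) (X : Fin n → Ω → ℝ) (hmeas : ∀ i, Measurable (X i))
    (hindep : iIndepFun X μ)
    (hval : ∀ i, ∀ ω, X i ω = 1 ∨ X i ω = -1)
    (hup : ∀ i, μ {ω | X i ω = 1} = 1 / 2)
    (E : Set Ω) (G : Finset (Finset (Fin n)))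
    (hsub : ∀ A ∈ G, {ω | ∀ i, X i ω = (if i ∈ A then (1:ℝ) else -1)} ⊆ E) :
    (G.card : ℝ≥0∞) * (1/2)^n ≤ μ E := by
  classical
  set P : Finset (Fin n) → Set Ω :=
    fun A => {ω | ∀ i, X i ω = (if i ∈ A then (1:ℝ) else -1)} with hP
  have hPeq : ∀ A, P A = ⋂ i, (X i)⁻¹' {(if i ∈ A then (1:ℝ) else -1)} := by
    intro A; ext ω; simp [hP, Set.mem_iInter]
  have hPmeas : ∀ A, MeasurableSet (P A) := by
    intro A; rw [hPeq]
    exact MeasurableSet.iInter (fun i => hmeas i (measurableSet_singleton _))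
  have hone : ∀ i, μ ((X i)⁻¹' {(1:ℝ)}) = 1/2 := by
    intro i
    have : (X i)⁻¹' {(1:ℝ)} = {ω | X i ω = 1} := by ext ω; simp
    rw [this]; exact hup i
  have hmone : ∀ i, μ ((X i)⁻¹' {(-1:ℝ)}) = 1/2 := by
    intro i
    have hc : (X i)⁻¹' {(-1:ℝ)} = {ω | X i ω = 1}ᶜ := by
      ext ω
      simp only [Set.mem_preimage, Set.mem_singleton_iff, Set.mem_compl_iff, Set.mem_setOf_eq]
      constructor
      · intro h h1; rw [h1] at h; norm_num at h
      · intro h; rcases hval i ω with h1 | h1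
        · exact absurd h1 h
        · exact h1
    have hms : MeasurableSet {ω | X i ω = 1} := by
      have : {ω | X i ω = 1} = (X i)⁻¹' {(1:ℝ)} := by ext ω; simp
      rw [this]; exact hmeas i (measurableSet_singleton _)
    rw [hc, measure_compl hms (measure_ne_top μ _), hup i, measure_univ, one_div,
      ENNReal.one_sub_inv_two]
  have hPμ : ∀ A, μ (P A) = (1/2)^n := by
    intro A
    have h1 : P A = ⋂ i ∈ Finset.univ, (X i)⁻¹' {(if i ∈ A then (1:ℝ) else -1)} := by
      rw [hPeq]; simp
    rw [h1, hindep.measure_inter_preimage_eq_mul Finset.univ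
      (fun i _ => measurableSet_singleton _)]
    have h2 : ∀ i ∈ Finset.univ, μ ((X i)⁻¹' {(if i ∈ A then (1:ℝ) else -1)}) = 1/2 := by
      intro i _
      by_cases h : i ∈ A <;> simp [h, hone i, hmone i]
    rw [Finset.prod_congr rfl h2, Finset.prod_const, Finset.card_univ, Fintype.card_fin]
  have hdisj : (↑G : Set (Finset (Fin n))).PairwiseDisjoint P := by
    intro A _ B _ hAB
    rw [Function.onFun, Set.disjoint_left]
    intro ω hA hB
    apply hAB
    ext i
    have h1 := hA i
    have h2 := hB i
    by_contra hne
    rcases Decidable.em (i ∈ A) with h | h <;> rcases Decidable.em (i ∈ B) with h' | h' <;>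
      simp [h, h'] at h1 h2 hne <;> rw [h1] at h2 <;> norm_num at h2
  calc (G.card : ℝ≥0∞) * (1/2)^n = ∑ A ∈ G, μ (P A) := by
        rw [Finset.sum_congr rfl (fun A _ => hPμ A), Finset.sum_const, nsmul_eq_mul]
    _ = μ (⋃ A ∈ G, P A) := (measure_biUnion_finset hdisj (fun A _ => hPmeas A)).symm
    _ ≤ μ E := measure_mono (Set.iUnion₂_subset hsub)

end Helpers
set_option maxHeartbeats 2000000 in
/-- reverse Chernoff: if `X₁,…,Xₙ` are independent uniform `±1` random
variables, `X = (1/n)∑Xᵢ`, and `√6 ≤ c ≤ √n/2`, then `P(X ≥ c/√n) ≥ exp(−9c²/2)`. -/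
theorem stmt11 {Ω : Type*} [MeasurableSpace Ω] (μ : Measure Ω) [IsProbabilityMeasure μ]
    (n : ℕ) (X : Fin n → Ω → ℝ) (hmeas : ∀ i, Measurable (X i))
    (hindep : iIndepFun X μ)
    (hval : ∀ i, ∀ ω, X i ω = 1 ∨ X i ω = -1)
    (hup : ∀ i, μ {ω | X i ω = 1} = 1 / 2)
    (c : ℝ) (hc1 : Real.sqrt 6 ≤ c) (hc2 : c ≤ Real.sqrt n / 2) :
    ENNReal.ofReal (Real.exp (-(9 * c ^ 2) / 2)) ≤
      μ {ω | c / Real.sqrt n ≤ (1 / (n : ℝ)) * ∑ i, X i ω} := by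
  classical
  have hs0 : (0:ℝ) ≤ Real.sqrt n := Real.sqrt_nonneg _
  set s : ℝ := Real.sqrt n with hsdef
  have hc0 : 0 < c := lt_of_lt_of_le (Real.sqrt_pos.mpr (by norm_num)) hc1
  have hc6 : 6 ≤ c^2 := by
    nlinarith [Real.sq_sqrt (by norm_num : (0:ℝ) ≤ 6), Real.sqrt_nonneg 6]
  have h2c : 2*c ≤ s := by linarith
  have hspos : (0:ℝ) < s := by linarith
  have hs2 : s^2 = n := Real.sq_sqrt (Nat.cast_nonneg n)
  have hn0 : (0:ℝ) < n := by nlinarith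
  have hn1 : 1 ≤ n := by exact_mod_cast Nat.one_le_iff_ne_zero.mpr (by
    intro h; rw [h] at hn0; norm_num at hn0)
  set E : Set Ω := {ω | c / Real.sqrt n ≤ (1 / (n : ℝ)) * ∑ i, X i ω} with hE
  have hsub_gen : ∀ A : Finset (Fin n), (n:ℝ) + c*s ≤ 2*A.card →
      {ω | ∀ i, X i ω = (if i ∈ A then (1:ℝ) else -1)} ⊆ E := by
    intro A hA ω hω
    have hω' : ∀ i, X i ω = (if i ∈ A then (1:ℝ) else -1) := hω
    have hsum : ∑ i, X i ω = 2*A.card - n := by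
      rw [Finset.sum_congr rfl (fun i _ => hω' i)]
      exact sum_signs n A
    simp only [hE, Set.mem_setOf_eq]
    rw [hsum]
    have hcs : c / Real.sqrt n = c*s/(n:ℝ) := by
      rw [← hsdef, ← hs2]
      field_simp
    rw [hcs, show (1:ℝ)/(n:ℝ) * (2*A.card - n) = (2*A.card - n)/n by ring,
      div_le_div_iff₀ hn0 hn0]
    nlinarith [mul_le_mul_of_nonneg_right
      (show c*s ≤ 2*(A.card:ℝ) - n by linarith) (le_of_lt hn0)]
  have h2exp34 : (2:ℝ) ≤ Real.exp (3/4) := by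
    have := exp_ge_T4 (3/4) (by norm_num); nlinarith [this]
  by_cases hreg : 25*c^2 ≤ 4*(n:ℝ)
  · -- Regime A
    have h5c2s : 5*c ≤ 2*s := by nlinarith [hreg, hs2, mul_pos hc0 hspos]
    have hs6 : 6 ≤ s := by nlinarith [sq_nonneg (s-6), hs2, hreg, hc6]
    set m : ℕ := n/2 with hm
    set K₀ : ℕ := ⌈((n:ℝ) + c*s)/2⌉₊ with hK₀
    set L : ℕ := ⌈s⌉₊ with hL
    set K₁ : ℕ := K₀ + (L-1) with hK₁
    set I₁ : ℕ := K₁ - m with hI₁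
    have hK0lb : ((n:ℝ) + c*s)/2 ≤ K₀ := Nat.le_ceil _
    have hK0ub : (K₀:ℝ) ≤ ((n:ℝ) + c*s)/2 + 1 :=
      le_of_lt (Nat.ceil_lt_add_one (by positivity))
    have hLlb : s ≤ L := Nat.le_ceil s
    have hLub : (L:ℝ) ≤ s + 1 := le_of_lt (Nat.ceil_lt_add_one hs0)
    have hL1 : 1 ≤ L := Nat.one_le_ceil_iff.mpr hspos
    have hK1cast : (K₁:ℝ) = K₀ + L - 1 := by
      rw [hK₁]; push_cast [hL1]; ring
    have hmub : (m:ℝ) ≤ (n:ℝ)/2 := by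
      have : ((n/2 : ℕ) : ℝ) * 2 ≤ n := by exact_mod_cast Nat.div_mul_le_self n 2
      rw [hm]; linarith
    have hmlb : (n:ℝ)/2 - 1/2 ≤ m := by
      have h' : n ≤ 2*(n/2) + 1 := by omega
      have : (n:ℝ) ≤ 2*((n/2:ℕ):ℝ) + 1 := by exact_mod_cast h'
      rw [hm]; linarith
    have hmK0 : m ≤ K₀ := by
      have h' : (m:ℝ) ≤ (K₀:ℝ) := by linarith [hK0lb, hmub, mul_pos hc0 hspos]
      exact Nat.cast_le.mp h'
    have hmK1 : m ≤ K₁ := le_trans hmK0 (Nat.le_add_right _ _)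
    have hK1n : K₁ ≤ n := by
      have : (K₁:ℝ) ≤ (n:ℝ) := by
        rw [hK1cast]
        nlinarith [hK0ub, hLub, hs2, h5c2s, hs6, hc0, hspos]
      exact Nat.cast_le.mp this
    have hI1cast : (I₁:ℝ) = (K₁:ℝ) - m := by rw [hI₁]; push_cast [hmK1]; ring
    have hI1ub : (I₁:ℝ) ≤ c*s/2 + s + 3/2 := by
      rw [hI1cast, hK1cast]; linarith
    have hI1cond : 5*(2*(I₁:ℝ) - 1) ≤ 4*(n:ℝ) := by
      nlinarith [hI1ub, hs2, h5c2s, hs6, hspos]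
    have hmI1K1 : m + I₁ = K₁ := by omega
    have hchain := chain n m hm hn1 I₁ hI1cond (by omega)
    rw [hmI1K1] at hchain
    -- counting
    set G : Finset (Finset (Fin n)) :=
      (Finset.Icc K₀ K₁).biUnion
        (fun k => Finset.powersetCard k (Finset.univ : Finset (Fin n))) with hG
    have hGcard : G.card = ∑ k ∈ Finset.Icc K₀ K₁, n.choose k := by
      rw [hG, Finset.card_biUnion]
      · apply Finset.sum_congr rfl
        intro k _
        rw [Finset.card_powersetCard, Finset.card_univ, Fintype.card_fin]
      · intro x _ y _ hxy
        rw [Function.onFun, Finset.disjoint_left]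
        intro A hA hA'
        exact hxy ((Finset.mem_powersetCard.mp hA).2 ▸ (Finset.mem_powersetCard.mp hA').2 ▸ rfl)
    have hn2K0 : n ≤ 2*K₀ := by
      have h' : (n:ℝ) ≤ ((2*K₀ : ℕ):ℝ) := by push_cast; linarith [hK0lb, mul_pos hc0 hspos]
      exact Nat.cast_le.mp h'
    have hcard_ge : L * n.choose K₁ ≤ ∑ k ∈ Finset.Icc K₀ K₁, n.choose k := by
      have hmono : ∀ k ∈ Finset.Icc K₀ K₁, n.choose K₁ ≤ n.choose k := by
        intro k hk
        rcases Finset.mem_Icc.mp hk with ⟨hk1, hk2⟩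
        exact choose_anti n k (by omega) K₁ hk2
      calc L * n.choose K₁ = (Finset.Icc K₀ K₁).card * n.choose K₁ := by
            rw [Nat.card_Icc]; congr 1; omega
        _ = ∑ _k ∈ Finset.Icc K₀ K₁, n.choose K₁ := by rw [Finset.sum_const, smul_eq_mul]
        _ ≤ ∑ k ∈ Finset.Icc K₀ K₁, n.choose k := Finset.sum_le_sum hmono
    have hGsub : ∀ A ∈ G, {ω | ∀ i, X i ω = (if i ∈ A then (1:ℝ) else -1)} ⊆ E := by
      intro A hA
      rw [hG, Finset.mem_biUnion] at hA
      obtain ⟨k, hk, hAk⟩ := hA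
      have hcardA : A.card = k := (Finset.mem_powersetCard.mp hAk).2
      rcases Finset.mem_Icc.mp hk with ⟨hk1, _⟩
      apply hsub_gen
      have : (K₀:ℝ) ≤ (k:ℝ) := by exact_mod_cast hk1
      rw [hcardA]
      linarith [hK0lb]
    have hcount := count_bound μ n X hmeas hindep hval hup E G hGsub
    refine le_trans ?_ hcount
    rw [half_pow, ← ENNReal.ofReal_natCast G.card,
      ← ENNReal.ofReal_mul (by positivity)]
    apply ENNReal.ofReal_le_ofReal
    -- real inequality
    set ev : ℝ := Real.exp (-(3*(I₁:ℝ)^2)/n) with hev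
    have hev0 : 0 < ev := Real.exp_pos _
    have hGR : (2:ℝ)^n * ev / 2 ≤ (G.card:ℝ) := by
      have hchalf := choose_half_real n hn1
      have hcK1 : (0:ℝ) ≤ (n.choose K₁ : ℝ) := by positivity
      have c1 : (2:ℝ)^n * ev / 2 ≤ s * ((n.choose m : ℝ) * ev) := by
        have := mul_le_mul_of_nonneg_right hchalf (le_of_lt hev0)
        rw [← hsdef] at this
        calc (2:ℝ)^n * ev / 2 ≤ (2 * s * (n.choose (n/2) : ℝ)) * ev / 2 := by linarith
          _ = s * ((n.choose m : ℝ) * ev) := by rw [hm]; ring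
      have c2 : s * ((n.choose m : ℝ) * ev) ≤ s * (n.choose K₁ : ℝ) :=
        mul_le_mul_of_nonneg_left hchain (le_of_lt hspos)
      have c3 : s * (n.choose K₁ : ℝ) ≤ (L:ℝ) * (n.choose K₁ : ℝ) :=
        mul_le_mul_of_nonneg_right hLlb hcK1
      have c4 : (L:ℝ) * (n.choose K₁ : ℝ) ≤ (G.card : ℝ) := by
        rw [hGcard]
        exact_mod_cast hcard_ge
      linarith
    have hmain : 3*(I₁:ℝ)^2/(n:ℝ) ≤ 9*c^2/2 - 3/4 := by
      rw [div_le_iff₀ hn0, ← hs2]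
      have hI2 : (I₁:ℝ)^2 ≤ (c*s/2 + s + 3/2)^2 :=
        pow_le_pow_left₀ (Nat.cast_nonneg I₁) hI1ub 2
      have hc60 : (0:ℝ) ≤ c^2 - 6 := by linarith
      have hB : (0:ℝ) ≤ 2*s - 5*c := by linarith
      nlinarith [hI2, mul_nonneg hc60 (sq_nonneg s),
        mul_nonneg (mul_nonneg (le_of_lt hc0) (le_of_lt hspos)) (by linarith : (0:ℝ) ≤ s - 6),
        mul_nonneg (le_of_lt hspos) (by linarith : (0:ℝ) ≤ s - 6),
        mul_nonneg (sq_nonneg (c - 12/5)) (sq_nonneg s), hs6, hc6]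
    have hfinal : Real.exp (-(9 * c ^ 2) / 2) ≤ ev / 2 := by
      have hep : (0:ℝ) < Real.exp (-(9*c^2)/2) := Real.exp_pos _
      have h1 : 2 * Real.exp (-(9*c^2)/2) ≤ Real.exp (3/4) * Real.exp (-(9*c^2)/2) :=
        mul_le_mul_of_nonneg_right h2exp34 (le_of_lt hep)
      have h2 : Real.exp (3/4) * Real.exp (-(9*c^2)/2) = Real.exp (3/4 + -(9*c^2)/2) :=
        (Real.exp_add _ _).symm
      have h3 : Real.exp (3/4 + -(9*c^2)/2) ≤ ev := by
        rw [hev]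
        apply Real.exp_le_exp.mpr
        rw [show -(3*(I₁:ℝ)^2)/(n:ℝ) = -(3*(I₁:ℝ)^2/(n:ℝ)) from neg_div _ _]
        linarith [hmain]
      linarith
    have hhp : (0:ℝ) ≤ ((1:ℝ)/2)^n := by positivity
    calc Real.exp (-(9 * c ^ 2) / 2) ≤ ev / 2 := hfinal
      _ = ((2:ℝ)^n * ev / 2) * (1/2)^n := by
          have hpn : ((2:ℝ)^n) ≠ 0 := by positivity
          rw [show ((1:ℝ)/2)^n = ((2:ℝ)^n)⁻¹ by rw [one_div, inv_pow]]
          symm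
          rw [mul_comm ((2:ℝ)^n * ev / 2) _, ← mul_div_assoc, ← mul_assoc,
            inv_mul_cancel₀ hpn, one_mul]
      _ ≤ (G.card:ℝ) * (1/2)^n := mul_le_mul_of_nonneg_right hGR hhp
  · -- Regime B
    have hreg2 : 4*(n:ℝ) < 25*c^2 := not_le.mp hreg
    set G : Finset (Finset (Fin n)) := {Finset.univ} with hG
    have hGsub : ∀ A ∈ G, {ω | ∀ i, X i ω = (if i ∈ A then (1:ℝ) else -1)} ⊆ E := by
      intro A hA
      rw [hG, Finset.mem_singleton] at hA
      subst hA
      apply hsub_gen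
      rw [Finset.card_univ, Fintype.card_fin]
      nlinarith [hs2, h2c, hc0, hspos]
    have hcount := count_bound μ n X hmeas hindep hval hup E G hGsub
    refine le_trans ?_ hcount
    rw [hG, Finset.card_singleton, Nat.cast_one, one_mul, half_pow]
    apply ENNReal.ofReal_le_ofReal
    have h2e : (2:ℝ) ≤ Real.exp (18/25) := by
      have := exp_ge_T4 (18/25) (by norm_num); nlinarith [this]
    have h2n : (2:ℝ)^n ≤ Real.exp ((18/25)*n) := by
      calc (2:ℝ)^n ≤ (Real.exp (18/25))^n := pow_le_pow_left₀ (by norm_num) h2e n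
        _ = Real.exp ((18/25)*n) := by rw [← Real.exp_nat_mul]; ring_nf
    have key : Real.exp (-(9 * c ^ 2) / 2) * 2^n ≤ 1 := by
      calc Real.exp (-(9 * c ^ 2) / 2) * 2^n
          ≤ Real.exp (-(9 * c ^ 2) / 2) * Real.exp ((18/25)*n) :=
            mul_le_mul_of_nonneg_left h2n (le_of_lt (Real.exp_pos _))
        _ = Real.exp (-(9 * c ^ 2) / 2 + (18/25)*n) := by rw [← Real.exp_add]
        _ ≤ Real.exp 0 := Real.exp_le_exp.mpr (by nlinarith [hreg2])
        _ = 1 := Real.exp_zero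
    have h2npos : (0:ℝ) < 2^n := by positivity
    rw [show ((1:ℝ)/2)^n = ((2:ℝ)^n)⁻¹ by rw [one_div, inv_pow]]
    have e0 : Real.exp (-(9 * c ^ 2) / 2)
        = (Real.exp (-(9 * c ^ 2) / 2) * 2^n) * ((2:ℝ)^n)⁻¹ := by
      rw [mul_assoc, mul_inv_cancel₀ (ne_of_gt h2npos), mul_one]
    rw [e0]
    calc (Real.exp (-(9 * c ^ 2) / 2) * 2^n) * ((2:ℝ)^n)⁻¹
        ≤ 1 * ((2:ℝ)^n)⁻¹ := mul_le_mul_of_nonneg_right key (by positivity)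
      _ = ((2:ℝ)^n)⁻¹ := one_mul _
end
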